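/- Let n be divisible by 4, n ≥ 8, m = n/2, and 1 ≤ a < m/2. The sets P_1 = {0, a, m/2, m+a} and P_2 = {0, a, a+m/2, m} in Z_n are not related by any transposition or inversion of Z_n; combined with equality of their interval-class multisets, they form a Z-related pair. -/
import Mathlib


/-- Interval class between `p` and `q` in `ZMod n`. -/
def ic (n : ℕ) (p q : ZMod n) : ℕ := min (p - q).val (n - (p - q).val)

/-- The interval-class multiset of a pitch-class set (unordered pairs of distinct
elements, enumerated via `val`-increasing ordered pairs; `ic` is symmetric). -/
def intervalMultiset (n : ℕ) (P : Finset (ZMod n)) : Multiset ℕ :=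
  (((P ×ˢ P).filter fun x => x.1.val < x.2.val).val).map fun x => ic n x.1 x.2

/-- `P` and `Q` are related by a transposition `p ↦ p + t`. -/
def TranspRel (n : ℕ) (P Q : Finset (ZMod n)) : Prop :=
  ∃ t : ZMod n, P.image (fun p => p + t) = Q

/-- `P` and `Q` are related by an inversion `p ↦ s - p`. -/
def InvRel (n : ℕ) (P Q : Finset (ZMod n)) : Prop :=
  ∃ s : ZMod n, P.image (fun p => s - p) = Q

/-- `P` and `Q` are Z-related: equal interval-class multisets, but not related by
any transposition or inversion. -/
def ZRelated (n : ℕ) (P Q : Finset (ZMod n)) : Prop :=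
  intervalMultiset n P = intervalMultiset n Q ∧ ¬ TranspRel n P Q ∧ ¬ InvRel n P Q

/-- The scaling map on sets: `dP = {dp : p ∈ P} ⊆ ZMod (d*m)`. -/
def scaleSet (d m : ℕ) (P : Finset (ZMod m)) : Finset (ZMod (d * m)) :=
  P.image fun p => ((d * p.val : ℕ) : ZMod (d * m))

lemma quad (n : ℕ) (b c d e : ZMod n)
    (h1 : b.val < c.val) (h2 : c.val < d.val) (h3 : d.val < e.val) :
    intervalMultiset n {b, c, d, e} =
      {ic n b c, ic n b d, ic n b e, ic n c d, ic n c e, ic n d e} := by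
  have ne : ∀ x y : ZMod n, x.val < y.val → x ≠ y := fun x y h hxy => by simp [hxy] at h
  have hval : ({b, c, d, e} : Finset (ZMod n)).val = (b ::ₘ c ::ₘ d ::ₘ e ::ₘ 0) := by
    rw [show ({b,c,d,e} : Finset (ZMod n)) = insert b (insert c (insert d {e})) from rfl]
    rw [Finset.insert_val_of_notMem, Finset.insert_val_of_notMem, Finset.insert_val_of_notMem]
    · rfl
    · simp; exact ne d e h3
    · simp [ne c d h2, ne c e (h2.trans h3)]
    · simp [ne b c h1, ne b d (h1.trans h2), ne b e (h1.trans (h2.trans h3))]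
  unfold intervalMultiset
  rw [Finset.filter_val, Finset.product_val, hval]
  simp only [Multiset.cons_product, Multiset.zero_product, Multiset.map_cons, Multiset.map_zero,
    Multiset.filter_add, Multiset.filter_cons, Multiset.filter_zero]
  rw [if_neg (by omega), if_pos h1, if_pos (h1.trans h2), if_pos (h1.trans (h2.trans h3)),
    if_neg (by omega), if_neg (by omega), if_pos h2, if_pos (h2.trans h3),
    if_neg (by omega), if_neg (by omega), if_neg (by omega), if_pos h3,
    if_neg (by omega), if_neg (by omega), if_neg (by omega), if_neg (by omega)]
  simp only [Multiset.map_add, Multiset.map_cons, Multiset.map_zero]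
  rfl

lemma sub_cast (n x y : ℕ) (h : y ≤ x + n) :
    ((x : ZMod n) - (y : ZMod n)) = ((x + n - y : ℕ) : ZMod n) := by
  have : ((x + n - y : ℕ) : ZMod n) = ((x + n : ℕ) : ZMod n) - (y : ZMod n) := by
    rw [Nat.cast_sub h]
  rw [this]; push_cast [ZMod.natCast_self]; ring

lemma ic_lt (n x y : ℕ) [NeZero n] (hxy : x < y) (hy : y < n) :
    ic n (x : ZMod n) (y : ZMod n) = min (y - x) (n - (y - x)) := by
  unfold ic
  rw [sub_cast n x y (by omega), ZMod.val_cast_of_lt (by omega)]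
  omega

lemma notmem4 (n : ℕ) [NeZero n] (v x y z : ℕ) (hv : v < n) (hxn : x < n) (hyn : y < n)
    (hzn : z < n) (h0 : v ≠ 0) (hx : v ≠ x) (hy : v ≠ y) (hz : v ≠ z)
    (h : (v : ZMod n) ∈ ({(0 : ZMod n), (x : ZMod n), (y : ZMod n), (z : ZMod n)} :
      Finset (ZMod n))) : False := by
  simp only [Finset.mem_insert, Finset.mem_singleton] at h
  rcases h with h | h | h | h
  · exact h0 (by simpa [ZMod.val_cast_of_lt hv] using congrArg ZMod.val h)
  · exact hx (by simpa [ZMod.val_cast_of_lt hv, ZMod.val_cast_of_lt hxn] using congrArg ZMod.val h)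
  · exact hy (by simpa [ZMod.val_cast_of_lt hv, ZMod.val_cast_of_lt hyn] using congrArg ZMod.val h)
  · exact hz (by simpa [ZMod.val_cast_of_lt hv, ZMod.val_cast_of_lt hzn] using congrArg ZMod.val h)

/-- The general `k = 4` construction: `P₁ = {0, a, m/2, m+a}` and
`P₂ = {0, a, a+m/2, m}` (with `m = n/2`) are not related by any transposition or
inversion of `ZMod n`, and form a Z-related pair. -/
theorem k4_Z_related (n : ℕ) (h4 : 4 ∣ n) (hn : 8 ≤ n) (a : ℕ)
    (ha1 : 1 ≤ a) (ha2 : a < n / 2 / 2) :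
    ZRelated n
      ({(0 : ZMod n), (a : ZMod n), ((n / 2 / 2 : ℕ) : ZMod n),
        ((n / 2 + a : ℕ) : ZMod n)} : Finset (ZMod n))
      ({(0 : ZMod n), (a : ZMod n), ((a + n / 2 / 2 : ℕ) : ZMod n),
        ((n / 2 : ℕ) : ZMod n)} : Finset (ZMod n)) := by
  obtain ⟨k, hk⟩ := h4
  haveI : NeZero n := ⟨by omega⟩
  have e1 : n / 2 / 2 = k := by omega
  have e2 : n / 2 = 2 * k := by omega
  rw [e1] at ha2
  rw [e1, e2]
  have hkn : 2 ≤ k := by omega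
  have vc : ∀ x : ℕ, x < n → ((x : ZMod n)).val = x := fun x hx => ZMod.val_cast_of_lt hx
  have h0cast : (0 : ZMod n) = ((0 : ℕ) : ZMod n) := by norm_num
  refine ⟨?_, ?_, ?_⟩
  · -- interval multisets equal
    rw [h0cast]
    rw [quad n _ _ _ _ (by rw [vc 0 (by omega), vc a (by omega)]; omega)
        (by rw [vc a (by omega), vc k (by omega)]; omega)
        (by rw [vc k (by omega), vc (2*k+a) (by omega)]; omega),
      quad n _ _ _ _ (by rw [vc 0 (by omega), vc a (by omega)]; omega)
        (by rw [vc a (by omega), vc (a+k) (by omega)]; omega)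
        (by rw [vc (a+k) (by omega), vc (2*k) (by omega)]; omega)]
    rw [ic_lt n 0 a (by omega) (by omega), ic_lt n 0 k (by omega) (by omega),
      ic_lt n 0 (2*k+a) (by omega) (by omega), ic_lt n a k (by omega) (by omega),
      ic_lt n a (2*k+a) (by omega) (by omega), ic_lt n k (2*k+a) (by omega) (by omega),
      ic_lt n 0 (a+k) (by omega) (by omega), ic_lt n 0 (2*k) (by omega) (by omega),
      ic_lt n a (a+k) (by omega) (by omega), ic_lt n a (2*k) (by omega) (by omega),
      ic_lt n (a+k) (2*k) (by omega) (by omega)]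
    rw [show min (a-0) (n-(a-0)) = a from by omega,
      show min (k-0) (n-(k-0)) = k from by omega,
      show min (2*k+a-0) (n-(2*k+a-0)) = 2*k-a from by omega,
      show min (k-a) (n-(k-a)) = k-a from by omega,
      show min (2*k+a-a) (n-(2*k+a-a)) = 2*k from by omega,
      show min (2*k+a-k) (n-(2*k+a-k)) = k+a from by omega,
      show min (a+k-0) (n-(a+k-0)) = k+a from by omega,
      show min (2*k-0) (n-(2*k-0)) = 2*k from by omega,
      show min (a+k-a) (n-(a+k-a)) = k from by omega,
      show min (2*k-a) (n-(2*k-a)) = 2*k-a from by omega,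
      show min (2*k-(a+k)) (n-(2*k-(a+k))) = k-a from by omega]
    rw [Multiset.ext]
    intro b
    simp only [Multiset.insert_eq_cons, Multiset.count_cons, Multiset.count_singleton]
    split_ifs <;> omega
  · -- no transposition
    rintro ⟨t, ht⟩
    have hmem : ∀ p ∈ ({(0 : ZMod n), (a : ZMod n), ((k : ℕ) : ZMod n),
        ((2*k + a : ℕ) : ZMod n)} : Finset (ZMod n)), p + t ∈
        ({(0 : ZMod n), (a : ZMod n), ((a + k : ℕ) : ZMod n),
        ((2*k : ℕ) : ZMod n)} : Finset (ZMod n)) := fun p hp =>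
      ht ▸ Finset.mem_image_of_mem _ hp
    have ht0 := hmem 0 (by simp)
    rw [zero_add] at ht0
    simp only [Finset.mem_insert, Finset.mem_singleton] at ht0
    rcases ht0 with h | h | h | h <;> subst h
    · have := hmem ((k : ℕ) : ZMod n) (by simp)
      rw [add_zero] at this
      exact notmem4 n k a (a+k) (2*k) (by omega) (by omega) (by omega) (by omega)
        (by omega) (by omega) (by omega) (by omega) this
    · have := hmem ((2*k + a : ℕ) : ZMod n) (by simp)
      rw [← Nat.cast_add] at this
      exact notmem4 n (2*k+a+a) a (a+k) (2*k) (by omega) (by omega) (by omega) (by omega)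
        (by omega) (by omega) (by omega) (by omega) this
    · have := hmem ((k : ℕ) : ZMod n) (by simp)
      rw [← Nat.cast_add] at this
      exact notmem4 n (k+(a+k)) a (a+k) (2*k) (by omega) (by omega) (by omega) (by omega)
        (by omega) (by omega) (by omega) (by omega) this
    · have := hmem ((a : ℕ) : ZMod n) (by simp)
      rw [← Nat.cast_add] at this
      exact notmem4 n (a+2*k) a (a+k) (2*k) (by omega) (by omega) (by omega) (by omega)
        (by omega) (by omega) (by omega) (by omega) this
  · -- no inversion
    rintro ⟨s, hs⟩
    have hmem : ∀ p ∈ ({(0 : ZMod n), (a : ZMod n), ((k : ℕ) : ZMod n),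
        ((2*k + a : ℕ) : ZMod n)} : Finset (ZMod n)), s - p ∈
        ({(0 : ZMod n), (a : ZMod n), ((a + k : ℕ) : ZMod n),
        ((2*k : ℕ) : ZMod n)} : Finset (ZMod n)) := fun p hp =>
      hs ▸ Finset.mem_image_of_mem _ hp
    have ht0 := hmem 0 (by simp)
    rw [sub_zero] at ht0
    simp only [Finset.mem_insert, Finset.mem_singleton] at ht0
    rcases ht0 with h | h | h | h <;> subst h
    · have := hmem ((a : ℕ) : ZMod n) (by simp)
      rw [show (0 : ZMod n) - ((a : ℕ) : ZMod n) = ((0 + n - a : ℕ) : ZMod n) from by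
        rw [h0cast, sub_cast n 0 a (by omega)]] at this
      exact notmem4 n (0+n-a) a (a+k) (2*k) (by omega) (by omega) (by omega) (by omega)
        (by omega) (by omega) (by omega) (by omega) this
    · have := hmem ((k : ℕ) : ZMod n) (by simp)
      rw [sub_cast n a k (by omega)] at this
      exact notmem4 n (a+n-k) a (a+k) (2*k) (by omega) (by omega) (by omega) (by omega)
        (by omega) (by omega) (by omega) (by omega) this
    · have := hmem ((a : ℕ) : ZMod n) (by simp)
      rw [show ((a+k : ℕ) : ZMod n) - ((a : ℕ) : ZMod n) = ((k : ℕ) : ZMod n) from by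
        rw [← Nat.cast_sub (by omega)]; congr 1; omega] at this
      exact notmem4 n k a (a+k) (2*k) (by omega) (by omega) (by omega) (by omega)
        (by omega) (by omega) (by omega) (by omega) this
    · have := hmem ((k : ℕ) : ZMod n) (by simp)
      rw [show ((2*k : ℕ) : ZMod n) - ((k : ℕ) : ZMod n) = ((k : ℕ) : ZMod n) from by
        rw [← Nat.cast_sub (by omega)]; congr 1; omega] at this
      exact notmem4 n k a (a+k) (2*k) (by omega) (by omega) (by omega) (by omega)
        (by omega) (by omega) (by omega) (by omega) this
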